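/- Substitution of elements preserves 'at least n elements' in Weyl's sense: if X ∈ dⁿ(𝒰), a ∈ X, and b ∉ X, then (X \ {a}) ∪ {b} ∈ dⁿ(𝒰). -/
import Mathlib


def weylD {α : Type*} (𝒯 : Set (Set α)) : Set (Set α) :=
  {X | ∃ x ∈ X, X \ {x} ∈ 𝒯}

open Classical in
lemma mem_iterate_weylD {α : Type*} (n : ℕ) (X : Set α) :
    X ∈ (weylD)^[n] (Set.univ : Set (Set α)) ↔
      ∃ s : Finset α, ↑s ⊆ X ∧ s.card = n := by
  induction n generalizing X with
  | zero => simp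
  | succ n ih =>
    rw [Function.iterate_succ_apply']
    constructor
    · rintro ⟨x, hx, hX⟩
      obtain ⟨s, hs, hc⟩ := (ih _).mp hX
      refine ⟨insert x s, ?_, ?_⟩
      · intro y hy
        rcases Finset.mem_insert.mp hy with rfl | hy
        · exact hx
        · exact (hs hy).1
      · rw [Finset.card_insert_of_notMem (fun h => (hs h).2 rfl), hc]
    · rintro ⟨s, hs, hc⟩
      have hne : s.Nonempty := Finset.card_pos.mp (by omega)
      obtain ⟨x, hx⟩ := hne
      refine ⟨x, hs hx, (ih _).mpr ⟨s.erase x, ?_, ?_⟩⟩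
      · intro y hy
        exact ⟨hs (Finset.mem_of_mem_erase hy), Finset.ne_of_mem_erase hy⟩
      · rw [Finset.card_erase_of_mem hx, hc]; omega

open Classical in
theorem substitution_preserves_atLeast {α : Type*} (n : ℕ) (X : Set α) (a b : α)
    (hX : X ∈ (weylD)^[n] (Set.univ : Set (Set α))) (ha : a ∈ X) (hb : b ∉ X) :
    (X \ {a}) ∪ {b} ∈ (weylD)^[n] (Set.univ : Set (Set α)) := by
  obtain ⟨s, hs, hc⟩ := (mem_iterate_weylD n X).mp hX
  refine (mem_iterate_weylD n _).mpr ⟨s.image (fun x => if x = a then b else x), ?_, ?_⟩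
  · intro y hy
    obtain ⟨x, hx, hxy⟩ := Finset.mem_image.mp hy
    by_cases hxa : x = a
    · simp [hxa] at hxy; subst hxy; exact Or.inr rfl
    · simp [hxa] at hxy; subst hxy
      exact Or.inl ⟨hs hx, hxa⟩
  · rw [Finset.card_image_of_injOn, hc]
    intro x hx y hy hxy
    by_cases h1 : x = a <;> by_cases h2 : y = a
    · rw [h1, h2]
    · subst h1; simp [h2] at hxy; subst hxy; exact absurd (hs hy) hb
    · subst h2; simp [h1] at hxy; subst hxy; exact absurd (hs hx) hb
    · simpa [h1, h2] using hxy
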